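/- arXiv:2402.06705 — 2 statements merged into one kernel-verified Lean document; each statement's English description precedes it below -/
import Mathlib

section
/- Let G be a finite group, N ⊴ G, x, y ∈ N noncentral elements of G with x a p-element and y a q-element (p, q primes). Suppose every G-class of N has size coprime to |x^G| or to |y^G|. Then p = q if and only if xy = yx. -/
/-!
The hypothesis at `z = x` makes `|x^G|` and `|y^G|` coprime, since `x` is noncentral.

If `p = q`, one of the two class sizes, say `|x^G| = |G : C(x)|`, is prime to `p`, so `C(x)`
contains a Sylow `p`-subgroup of `G` and some conjugate `y^g` lies in `C(x)`. Coprime indices give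
`G = C(y) C(x)`, so `g` can be taken in `C(x)`, and then `y ∈ C(x)`.

If `p ≠ q` and `xy = yx`, then `x` and `y` are powers of `xy`, so `C(xy) ≤ C(x) ∩ C(y)` and both
`|x^G|` and `|y^G|` divide `|(xy)^G|`, contradicting the hypothesis at `z = xy`.
-/

def classSet {G : Type*} [Group G] (x : G) : Set G := {y | IsConj x y}

noncomputable def classSize {G : Type*} [Group G] (x : G) : ℕ := Nat.card (classSet x)

namespace Subgroup

variable {G : Type*} [Group G]

theorem exists_mul_eq_of_coprime_index {H K : Subgroup G} [H.FiniteIndex] [K.FiniteIndex]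
    (hco : H.index.Coprime K.index) (g : G) : ∃ k ∈ K, ∃ h ∈ H, k * h = g := by
  have hinf : (H ⊓ K).index = H.index * K.index :=
    le_antisymm index_inf_le <| Nat.le_of_dvd (Nat.pos_of_ne_zero (H ⊓ K).index_ne_zero_of_finite)
      (hco.mul_dvd_of_dvd_of_dvd (index_dvd_of_le inf_le_left) (index_dvd_of_le inf_le_right))
  have hrel : K.relIndex H = K.index := by
    refine Nat.eq_of_mul_eq_mul_right (Nat.pos_of_ne_zero H.index_ne_zero_of_finite) ?_
    rw [← inf_relIndex_left, relIndex_mul_index inf_le_left, hinf, mul_comm]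
  -- `H` acts transitively on `G ⧸ K`: the orbit of the trivial coset has `|H : H ⊓ K| = |G : K|`
  -- points
  have hstab : MulAction.stabilizer H ((1 : G) : G ⧸ K) = K.subgroupOf H := by
    ext h
    change ((h * 1 : G) : G ⧸ K) = ((1 : G) : G ⧸ K) ↔ _
    simp [QuotientGroup.eq, mem_subgroupOf]
  have horbit : MulAction.orbit H ((1 : G) : G ⧸ K) = Set.univ := by
    refine Set.eq_of_subset_of_ncard_le (Set.subset_univ _) ?_
    rw [← MulAction.index_stabilizer, hstab, Set.ncard_univ, ← index_eq_card]
    exact hrel.ge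
  obtain ⟨h, hh⟩ : ((g⁻¹ : G) : G ⧸ K) ∈ MulAction.orbit H ((1 : G) : G ⧸ K) := horbit ▸ trivial
  refine ⟨g * h, ?_, (h : G)⁻¹, H.inv_mem h.2, by group⟩
  have : ((h * 1 : G) : G ⧸ K) = ((g⁻¹ : G) : G ⧸ K) := hh
  simpa using K.inv_mem (QuotientGroup.eq.mp this)

theorem exists_sylow_le_of_not_dvd_index [Finite G] {p : ℕ} [Fact p.Prime] {H : Subgroup G}
    (hH : ¬ p ∣ H.index) : ∃ P : Sylow p G, (P : Subgroup G) ≤ H := by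
  obtain ⟨R⟩ : Nonempty (Sylow p H) := inferInstance
  have hR : ¬ p ∣ ((R : Subgroup H).map H.subtype).index := by
    rw [index_map_subtype]
    exact Nat.Prime.not_dvd_mul Fact.out R.not_dvd_index hH
  exact ⟨(R.isPGroup'.map H.subtype).toSylow hR, map_subtype_le _⟩

theorem exists_conj_mem_of_not_dvd_index [Finite G] {p : ℕ} [Fact p.Prime] {H : Subgroup G}
    (hH : ¬ p ∣ H.index) {y : G} (hy : ∃ b : ℕ, orderOf y = p ^ b) :
    ∃ g : G, g⁻¹ * y * g ∈ H := by
  obtain ⟨P, hPH⟩ := exists_sylow_le_of_not_dvd_index hH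
  obtain ⟨b, hb⟩ := hy
  have hyp : IsPGroup p (zpowers y) := IsPGroup.of_card (by rw [Nat.card_zpowers, hb])
  obtain ⟨Q, hyQ⟩ := hyp.exists_le_sylow
  obtain ⟨g, rfl⟩ := MulAction.exists_smul_eq G P Q
  have := hyQ (mem_zpowers y)
  rw [Sylow.coe_subgroup_smul, mem_pointwise_smul_iff_inv_smul_mem] at this
  exact ⟨g, hPH (by simpa [MulAut.smul_def, MulAut.conj_inv_apply] using this)⟩

theorem mem_of_coprime_index_centralizer [Finite G] {p : ℕ} [Fact p.Prime] {H : Subgroup G}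
    (hH : ¬ p ∣ H.index) {y : G} (hy : ∃ b : ℕ, orderOf y = p ^ b)
    (hco : H.index.Coprime (centralizer {y}).index) : y ∈ H := by
  obtain ⟨g, hg⟩ := exists_conj_mem_of_not_dvd_index hH hy
  obtain ⟨d, hd, c, hc, rfl⟩ := exists_mul_eq_of_coprime_index hco g
  have hdy : d⁻¹ * y * d = y := by
    rw [mul_assoc, ← mem_centralizer_singleton_iff.mp hd, inv_mul_cancel_left]
  have hcyc : c⁻¹ * y * c ∈ H := by
    rwa [show (d * c)⁻¹ * y * (d * c) = c⁻¹ * (d⁻¹ * y * d) * c by group, hdy] at hg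
  have := H.mul_mem (H.mul_mem hc hcyc) (H.inv_mem hc)
  rwa [show c * (c⁻¹ * y * c) * c⁻¹ = y by group] at this

end Subgroup

theorem Commute.exists_pow_mul_eq_left {G : Type*} [Group G] {x y : G} (h : Commute x y)
    (hco : (orderOf x).Coprime (orderOf y)) : ∃ k : ℕ, (x * y) ^ k = x := by
  obtain ⟨k, hkx, hky⟩ := Nat.chineseRemainder hco 1 0
  refine ⟨k, ?_⟩
  rw [h.mul_pow, pow_eq_pow_iff_modEq.mpr hkx, pow_eq_pow_iff_modEq.mpr hky, pow_one, pow_zero,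
    mul_one]

section classSize

variable {G : Type*} [Group G]

theorem classSize_eq_index_centralizer (x : G) :
    classSize x = (Subgroup.centralizer {x}).index := by
  have : classSet x = MulAction.orbit (ConjAct G) x := by
    ext g
    exact ConjAct.mem_orbit_conjAct.trans isConj_comm |>.symm
  rw [classSize, this, Nat.card_coe_set_eq, ← MulAction.index_stabilizer,
    Subgroup.centralizer_eq_comap_stabilizer]
  exact (Subgroup.index_comap_of_surjective _ (MulEquiv.surjective _)).symm

theorem classSize_eq_one_iff {x : G} : classSize x = 1 ↔ x ∈ Subgroup.center G := by
  rw [classSize_eq_index_centralizer, Subgroup.index_eq_one,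
    Subgroup.centralizer_eq_top_iff_subset, Set.singleton_subset_iff, SetLike.mem_coe]

theorem classSize_dvd_of_pow_eq {a b : G} {k : ℕ} (h : a ^ k = b) :
    classSize b ∣ classSize a := by
  rw [classSize_eq_index_centralizer, classSize_eq_index_centralizer]
  refine Subgroup.index_dvd_of_le fun g hg => ?_
  rw [Subgroup.mem_centralizer_singleton_iff] at hg ⊢
  exact h ▸ Commute.pow_right hg k

end classSize

theorem commute_of_coprime_classSize {G : Type*} [Group G] [Finite G] {p : ℕ} (hp : p.Prime)
    {x y : G} (hy : ∃ b : ℕ, orderOf y = p ^ b) (hco : (classSize x).Coprime (classSize y))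
    (hx : ¬ p ∣ classSize x) : Commute x y := by
  have : Fact p.Prime := ⟨hp⟩
  simp only [classSize_eq_index_centralizer] at hx hco
  exact (Subgroup.mem_centralizer_singleton_iff.mp
    (Subgroup.mem_of_coprime_index_centralizer hx hy hco)).symm

theorem stmt12_general {G : Type*} [Group G] [Finite G] (N : Subgroup G)
    (p q : ℕ) (hp : p.Prime) (hq : q.Prime) (x y : G) (hx : x ∈ N) (hy : y ∈ N)
    (hxc : x ∉ Subgroup.center G) (hyc : y ∉ Subgroup.center G)
    (hxp : ∃ a : ℕ, orderOf x = p ^ a) (hyq : ∃ b : ℕ, orderOf y = q ^ b)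
    (hcl : ∀ z ∈ N, Nat.Coprime (classSize z) (classSize x) ∨
      Nat.Coprime (classSize z) (classSize y)) :
    p = q ↔ Commute x y := by
  have hx1 : classSize x ≠ 1 := classSize_eq_one_iff.not.mpr hxc
  have hy1 : classSize y ≠ 1 := classSize_eq_one_iff.not.mpr hyc
  have hco : (classSize x).Coprime (classSize y) :=
    (hcl x hx).resolve_left fun h => hx1 (Nat.coprime_self _ |>.mp h)
  constructor
  · rintro rfl
    by_cases hpx : p ∣ classSize x
    · have hpy : ¬ p ∣ classSize y := fun hpy =>
        hp.one_lt.ne' (Nat.eq_one_of_dvd_coprimes hco hpx hpy)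
      exact (commute_of_coprime_classSize hp hxp hco.symm hpy).symm
    · exact commute_of_coprime_classSize hp hyq hco hpx
  · intro hxy
    by_contra hpq
    obtain ⟨a, ha⟩ := hxp
    obtain ⟨b, hb⟩ := hyq
    have hord : (orderOf x).Coprime (orderOf y) := by
      rw [ha, hb]
      exact ((Nat.coprime_primes hp hq).mpr hpq).pow a b
    obtain ⟨k, hk⟩ := hxy.exists_pow_mul_eq_left hord
    obtain ⟨l, hl⟩ := hxy.symm.exists_pow_mul_eq_left hord.symm
    rw [← hxy.eq] at hl
    rcases hcl (x * y) (N.mul_mem hx hy) with h | h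
    · exact hx1 (h.symm.eq_one_of_dvd (classSize_dvd_of_pow_eq hk))
    · exact hy1 (h.symm.eq_one_of_dvd (classSize_dvd_of_pow_eq hl))

theorem stmt12 {G : Type*} [Group G] [Finite G] (N : Subgroup G) (hN : N.Normal)
    (p q : ℕ) (hp : p.Prime) (hq : q.Prime) (x y : G) (hx : x ∈ N) (hy : y ∈ N)
    (hxc : x ∉ Subgroup.center G) (hyc : y ∉ Subgroup.center G)
    (hxp : ∃ a : ℕ, orderOf x = p ^ a) (hyq : ∃ b : ℕ, orderOf y = q ^ b)
    (hcl : ∀ z ∈ N, Nat.Coprime (classSize z) (classSize x) ∨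
      Nat.Coprime (classSize z) (classSize y)) :
    p = q ↔ Commute x y :=
  stmt12_general N p q hp hq x y hx hy hxc hyc hxp hyq hcl
end

section
/- Let G be a finite group and x, y ∈ G with gcd(|x^G|, |y^G|) = 1 and y ∈ C_G(x) ∩ C_G(y) =: K. Then G = C_G(x)·C_G(y) and x^G = x^{C_G(y)} ⊆ C_G(y). -/
open Pointwise

private noncomputable def classEquiv {G : Type*} [Group G] (x : G) :
    G ⧸ Subgroup.centralizer {x} ≃ classSet x := by
  refine Equiv.ofBijective
    (fun q => Quotient.liftOn' q
      (fun g => (⟨g * x * g⁻¹, isConj_iff.mpr ⟨g, rfl⟩⟩ : classSet x)) ?_) ⟨?_, ?_⟩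
  · intro a b hab
    rw [QuotientGroup.leftRel_apply] at hab
    have hc : x * (a⁻¹ * b) = (a⁻¹ * b) * x :=
      Subgroup.mem_centralizer_iff.mp hab x rfl
    ext
    simp only
    have : b * x = a * (a⁻¹ * b * x) * 1 := by group
    rw [this, ← hc]
    group
  · intro q1 q2
    induction q1 using Quotient.inductionOn'
    induction q2 using Quotient.inductionOn'
    rename_i a b
    intro hab
    have hab' : a * x * a⁻¹ = b * x * b⁻¹ := congrArg Subtype.val hab
    refine Quotient.sound' (QuotientGroup.leftRel_apply.mpr ?_)
    rw [Subgroup.mem_centralizer_iff]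
    rintro z rfl
    have : a⁻¹ * (a * z * a⁻¹) * b = a⁻¹ * (b * z * b⁻¹) * b := by rw [hab']
    calc z * (a⁻¹ * b) = a⁻¹ * (a * z * a⁻¹) * b := by group
      _ = a⁻¹ * (b * z * b⁻¹) * b := this
      _ = a⁻¹ * b * z := by group
  · rintro ⟨z, hz⟩
    obtain ⟨g, hg⟩ := isConj_iff.mp hz
    exact ⟨QuotientGroup.mk g, Subtype.ext hg⟩

private theorem classSize_eq_index {G : Type*} [Group G] (x : G) :
    classSize x = (Subgroup.centralizer {x}).index :=
  (Nat.card_congr (classEquiv x)).symm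

private theorem mul_eq_univ_of_coprime {G : Type*} [Group G] [Finite G]
    (H K : Subgroup G) (h : Nat.Coprime H.index K.index) :
    (H : Set G) * (K : Set G) = Set.univ := by
  classical
  have hH : H.index ≠ 0 := H.index_ne_zero_of_finite
  have hK : K.index ≠ 0 := K.index_ne_zero_of_finite
  have hdvd : H.index * K.index ∣ (H ⊓ K).index :=
    h.mul_dvd_of_dvd_of_dvd (Subgroup.index_dvd_of_le inf_le_left)
      (Subgroup.index_dvd_of_le inf_le_right)
  have hne : (H ⊓ K).index ≠ 0 := (H ⊓ K).index_ne_zero_of_finite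
  have hcard : (H ⊓ K).index = H.index * K.index :=
    le_antisymm Subgroup.index_inf_le (Nat.le_of_dvd (Nat.pos_of_ne_zero hne) hdvd)
  -- embedding into product of quotients
  let f : G ⧸ (H ⊓ K) → (G ⧸ H) × (G ⧸ K) := fun q =>
    (Subgroup.quotientMapOfLE inf_le_left q, Subgroup.quotientMapOfLE inf_le_right q)
  have hfinj : Function.Injective f := by
    intro q1 q2
    induction q1 using Quotient.inductionOn'
    induction q2 using Quotient.inductionOn'
    rename_i a b
    intro hab
    have h1 : (QuotientGroup.mk a : G ⧸ H) = QuotientGroup.mk b := congrArg Prod.fst hab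
    have h2 : (QuotientGroup.mk a : G ⧸ K) = QuotientGroup.mk b := congrArg Prod.snd hab
    exact QuotientGroup.eq.mpr
      ⟨QuotientGroup.eq.mp h1, QuotientGroup.eq.mp h2⟩
  haveI : Fintype (G ⧸ (H ⊓ K)) := Fintype.ofFinite _
  haveI : Fintype ((G ⧸ H) × (G ⧸ K)) := Fintype.ofFinite _
  have hcards : Fintype.card (G ⧸ (H ⊓ K)) = Fintype.card ((G ⧸ H) × (G ⧸ K)) := by
    rw [← Nat.card_eq_fintype_card, ← Nat.card_eq_fintype_card, Nat.card_prod]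
    exact hcard
  have hfsurj : Function.Surjective f :=
    ((Fintype.bijective_iff_injective_and_card f).mpr ⟨hfinj, hcards⟩).2
  ext g
  simp only [Set.mem_univ, iff_true]
  obtain ⟨q, hq⟩ := hfsurj (QuotientGroup.mk (1 : G), QuotientGroup.mk g)
  induction q using Quotient.inductionOn'
  rename_i a
  have h1 : (QuotientGroup.mk a : G ⧸ H) = QuotientGroup.mk 1 := congrArg Prod.fst hq
  have h2 : (QuotientGroup.mk a : G ⧸ K) = QuotientGroup.mk g := congrArg Prod.snd hq
  have ha : a ∈ H := by
    have := QuotientGroup.eq.mp h1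
    simpa using H.inv_mem this
  have hb : a⁻¹ * g ∈ K := QuotientGroup.eq.mp h2
  have : g = a * (a⁻¹ * g) := by group
  rw [this]
  exact Set.mul_mem_mul ha hb

theorem stmt16 {G : Type*} [Group G] [Finite G] (x y : G)
    (h : Nat.Coprime (classSize x) (classSize y))
    (hy : y ∈ Subgroup.centralizer {x} ⊓ Subgroup.centralizer {y}) :
    (Subgroup.centralizer {x} : Set G) * (Subgroup.centralizer {y} : Set G) = Set.univ ∧
    classSet x = (fun g : G => g * x * g⁻¹) '' (Subgroup.centralizer {y} : Set G) ∧
    classSet x ⊆ (Subgroup.centralizer {y} : Set G) := by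
  rw [classSize_eq_index, classSize_eq_index] at h
  have hxy : x * y = y * x := Subgroup.mem_centralizer_iff.mp hy.1 x rfl
  have h1 := mul_eq_univ_of_coprime _ _ h
  have h1' := mul_eq_univ_of_coprime _ _ h.symm
  have h2 : classSet x = (fun g : G => g * x * g⁻¹) '' (Subgroup.centralizer {y} : Set G) := by
    ext z
    constructor
    · intro hz
      obtain ⟨g, hg⟩ := isConj_iff.mp hz
      have : g ∈ (Subgroup.centralizer {y} : Set G) * (Subgroup.centralizer {x} : Set G) := by
        rw [h1']; trivial
      obtain ⟨k, hk, c, hc, rfl⟩ := this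
      have hcx : x * c = c * x := Subgroup.mem_centralizer_iff.mp hc x rfl
      refine ⟨k, hk, ?_⟩
      simp only
      rw [← hg]
      calc k * x * k⁻¹ = k * (x * c) * c⁻¹ * k⁻¹ := by group
        _ = k * (c * x) * c⁻¹ * k⁻¹ := by rw [hcx]
        _ = k * c * x * (k * c)⁻¹ := by group
    · rintro ⟨k, _, rfl⟩
      exact isConj_iff.mpr ⟨k, rfl⟩
  refine ⟨h1, h2, ?_⟩
  rw [h2]
  rintro z ⟨k, hk, rfl⟩
  have hyk : y * k = k * y := Subgroup.mem_centralizer_iff.mp hk y rfl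
  have hyk' : y * k⁻¹ = k⁻¹ * y := by
    calc y * k⁻¹ = k⁻¹ * (k * y) * k⁻¹ := by group
      _ = k⁻¹ * (y * k) * k⁻¹ := by rw [hyk]
      _ = k⁻¹ * y := by group
  rw [SetLike.mem_coe, Subgroup.mem_centralizer_iff]
  rintro w rfl
  calc w * (k * x * k⁻¹) = (w * k) * x * k⁻¹ := by group
    _ = (k * w) * x * k⁻¹ := by rw [hyk]
    _ = k * (w * x) * k⁻¹ := by group
    _ = k * (x * w) * k⁻¹ := by rw [← hxy]
    _ = (k * x) * (w * k⁻¹) := by group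
    _ = (k * x) * (k⁻¹ * w) := by rw [hyk']
    _ = (k * x * k⁻¹) * w := by group
end
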